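/- Let G be an X–Y normalized graph, let S ⊆ N(X) be a set such that no vertex of S is adjacent to a vertex of Y, let K(S) be the unique important witness of S, and let K1 be an important X–Y separator of G disjoint from S. Then K1 ≥ K(S). -/

import Mathlib

variable {V : Type*}

/-- `K` is an `X`–`Y` separator of `G`: `K` avoids `X ∪ Y` and every walk
from a vertex of `X` to a vertex of `Y` meets `K` (i.e. there is no
`X`–`Y` path in `G \ K`). -/
def IsSeparator (G : SimpleGraph V) (X Y K : Set V) : Prop :=
  K ⊆ (X ∪ Y)ᶜ ∧
  ∀ x ∈ X, ∀ y ∈ Y, ∀ w : G.Walk x y, ∃ v ∈ w.support, v ∈ K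

/-- `NR G A B`: the vertices of `G \ B` that are not reachable from `A` in `G \ B`. -/
def NR (G : SimpleGraph V) (A B : Set V) : Set V :=
  {v | v ∉ B ∧ ¬ ∃ a ∈ A, ∃ w : G.Walk a v, ∀ x ∈ w.support, x ∉ B}

/-- `Reach G A B`: the vertices reachable from `A` in `G \ B`. -/
def Reach (G : SimpleGraph V) (A B : Set V) : Set V :=
  {v | ∃ a ∈ A, ∃ w : G.Walk a v, ∀ x ∈ w.support, x ∉ B}

/-- The order on `X`–`Y` separators: `K1 ≤ K2` iff `NR(G,Y,K1) ⊆ NR(G,Y,K2)`. -/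
def SepLE (G : SimpleGraph V) (Y K1 K2 : Set V) : Prop :=
  NR G Y K1 ⊆ NR G Y K2

/-- The strict order on `X`–`Y` separators. -/
def SepLT (G : SimpleGraph V) (Y K1 K2 : Set V) : Prop :=
  NR G Y K1 ⊆ NR G Y K2 ∧ NR G Y K1 ≠ NR G Y K2

/-- A minimal `X`–`Y` separator: no proper subset is an `X`–`Y` separator. -/
def IsMinimalSeparator (G : SimpleGraph V) (X Y K : Set V) : Prop :=
  IsSeparator G X Y K ∧ ∀ K' ⊂ K, ¬ IsSeparator G X Y K'

/-- An important `X`–`Y` separator: a minimal separator `K` such that there is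
no separator `K'` with `K < K'` and `|K'| ≤ |K|`. -/
def IsImportantSeparator (G : SimpleGraph V) (X Y K : Set V) : Prop :=
  IsMinimalSeparator G X Y K ∧
  ¬ ∃ K', IsSeparator G X Y K' ∧ SepLT G Y K K' ∧ K'.ncard ≤ K.ncard

/-- The minimum size of an `X`–`Y` separator of `G`. -/
noncomputable def minSepSize (G : SimpleGraph V) (X Y : Set V) : ℕ :=
  sInf {n | ∃ K, IsSeparator G X Y K ∧ K.ncard = n}

/-- The excess of a separator: its size minus the minimum separator size. -/
noncomputable def excess (G : SimpleGraph V) (X Y K : Set V) : ℕ :=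
  K.ncard - minSepSize G X Y

/-- The graph `Pr(G,X,Y,K)`: the vertices `NR(G,Y,K) \ X` are deleted (here:
made isolated), and every vertex of `X` is made adjacent to every vertex of `K`. -/
def PrGraph (G : SimpleGraph V) (X Y K : Set V) : SimpleGraph V where
  Adj u v := u ≠ v ∧ u ∉ NR G Y K \ X ∧ v ∉ NR G Y K \ X ∧
    (G.Adj u v ∨ (u ∈ X ∧ v ∈ K) ∨ (u ∈ K ∧ v ∈ X))
  symm := by
    constructor
    rintro u v ⟨h1, h2, h3, h4⟩
    refine ⟨h1.symm, h3, h2, ?_⟩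
    rcases h4 with h | h | h
    · exact Or.inl h.symm
    · exact Or.inr (Or.inr ⟨h.2, h.1⟩)
    · exact Or.inr (Or.inl ⟨h.2, h.1⟩)
  loopless := by constructor; rintro v ⟨h1, -⟩; exact h1 rfl

/-- `NSet G X` is `N(X)`: the set of vertices outside `X` adjacent to a vertex of `X`. -/
def NSet (G : SimpleGraph V) (X : Set V) : Set V :=
  {v | v ∉ X ∧ ∃ x ∈ X, G.Adj x v}

/-- `G` is `X`–`Y` normalized: `N(X)` is an `X`–`Y` separator and is
the unique smallest `X`–`Y` separator. -/
def Normalized (G : SimpleGraph V) (X Y : Set V) : Prop :=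
  IsSeparator G X Y (NSet G X) ∧
  ∀ K, IsSeparator G X Y K → K ≠ NSet G X → (NSet G X).ncard < K.ncard

/-- The cover excess `CE(S)`: the minimum excess of an `X`–`Y` separator disjoint from `S`. -/
noncomputable def CE (G : SimpleGraph V) (X Y S : Set V) : ℕ :=
  sInf {n | ∃ K, IsSeparator G X Y K ∧ Disjoint K S ∧ excess G X Y K = n}

/-- A witness of `S`: an `X`–`Y` separator disjoint from `S` whose excess equals `CE(S)`. -/
noncomputable def IsWitness (G : SimpleGraph V) (X Y S K : Set V) : Prop :=
  IsSeparator G X Y K ∧ Disjoint K S ∧ excess G X Y K = CE G X Y S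

/-- An important witness of `S`: a witness of `S` that is an important `X`–`Y` separator. -/
noncomputable def IsImportantWitness (G : SimpleGraph V) (X Y S K : Set V) : Prop :=
  IsWitness G X Y S K ∧ IsImportantSeparator G X Y K


/-! `X`–`Y` separators, ordered by `NR G Y`, have a meet and a join (`sepMeet`, `sepJoin`)
whose sizes add up to `|K₁| + |K₂|`. If `K(S) ≰ K₁`, the join of `K(S)` and `K₁` lies strictly
above the important separator `K₁`, so it is larger than `K₁`; hence the meet, a separator disjoint
from `S`, is smaller than the witness `K(S)`, which is impossible. -/

section SeparatorLattice

open SimpleGraph Set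

def sepMeet (G : SimpleGraph V) (Y K₁ K₂ : Set V) : Set V :=
  (K₁ ∪ K₂) \ (Reach G Y K₁ ∪ Reach G Y K₂)

def sepJoin (G : SimpleGraph V) (Y K₁ K₂ : Set V) : Set V :=
  (K₁ ∪ K₂) \ (NR G Y K₁ ∪ NR G Y K₂)

variable {G : SimpleGraph V} {X Y S K K' K₁ K₂ : Set V}

theorem notMem_of_mem_reach {v : V} (hv : v ∈ Reach G Y K) : v ∉ K := by
  obtain ⟨_, _, w, hw⟩ := hv
  exact hw v w.end_mem_support

theorem mem_reach_of_adj {u v : V} (hu : u ∈ Reach G Y K) (huv : G.Adj u v) (hv : v ∉ K) :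
    v ∈ Reach G Y K := by
  obtain ⟨a, ha, w, hw⟩ := hu
  refine ⟨a, ha, w.concat huv, fun x hx => ?_⟩
  rw [Walk.support_concat, List.mem_append, List.mem_singleton] at hx
  rcases hx with hx | rfl
  · exact hw x hx
  · exact hv

theorem mem_nr_iff {v : V} : v ∈ NR G Y K ↔ v ∉ K ∧ v ∉ Reach G Y K := Iff.rfl

theorem mem_reach_or_mem_nr {v : V} (hv : v ∉ K) : v ∈ Reach G Y K ∨ v ∈ NR G Y K := by
  by_cases h : v ∈ Reach G Y K
  · exact Or.inl h
  · exact Or.inr ⟨hv, h⟩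

theorem mem_reach_self {y : V} (hy : y ∈ Y) (hyK : y ∉ K) : y ∈ Reach G Y K := by
  refine ⟨y, hy, Walk.nil, fun x hx => ?_⟩
  rw [Walk.support_nil, List.mem_singleton] at hx
  exact hx ▸ hyK

theorem reach_subset_of_closed {C : Set V} (hY : ∀ y ∈ Y, y ∉ K → y ∈ C)
    (hC : ∀ ⦃u v : V⦄, G.Adj u v → u ∈ C → u ∉ K → v ∉ K → v ∈ C) :
    Reach G Y K ⊆ C := by
  rintro v ⟨a, ha, w, hw⟩
  have key : ∀ {a b : V} (w : G.Walk a b), (∀ x ∈ w.support, x ∉ K) → a ∈ C → b ∈ C := by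
    intro a b w
    induction w with
    | nil => exact fun _ h => h
    | cons h w ih =>
      intro hw ha
      rw [Walk.support_cons] at hw
      exact ih (fun x hx => hw x (List.mem_cons_of_mem _ hx))
        (hC h ha (hw _ List.mem_cons_self) (hw _ (List.mem_cons_of_mem _ w.start_mem_support)))
  exact key w hw (hY a ha (hw a w.start_mem_support))

theorem isSeparator_iff :
    IsSeparator G X Y K ↔ K ⊆ (X ∪ Y)ᶜ ∧ Disjoint X (Reach G Y K) := by
  refine and_congr_right fun _ => ⟨fun h => ?_, fun h x hx y hy w => ?_⟩
  · refine Set.disjoint_left.2 fun x hx ⟨y, hy, w, hw⟩ => ?_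
    obtain ⟨v, hv, hvK⟩ := h x hx y hy w.reverse
    rw [Walk.support_reverse, List.mem_reverse] at hv
    exact hw v hv hvK
  · by_contra! hw
    refine Set.disjoint_left.1 h hx ⟨y, hy, w.reverse, fun v hv => hw v ?_⟩
    rwa [Walk.support_reverse, List.mem_reverse] at hv

theorem IsSeparator.subset_nr (hK : IsSeparator G X Y K) : X ⊆ NR G Y K :=
  fun _ hx => ⟨fun hxK => hK.1 hxK (Or.inl hx), Set.disjoint_left.1 (isSeparator_iff.1 hK).2 hx⟩

theorem reach_sepMeet_subset :
    Reach G Y (sepMeet G Y K₁ K₂) ⊆ Reach G Y K₁ ∪ Reach G Y K₂ := by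
  have h : ∀ v, v ∉ sepMeet G Y K₁ K₂ →
      v ∈ Reach G Y K₁ ∪ Reach G Y K₂ ∨ v ∉ K₁ ∧ v ∉ K₂ := by
    intro v hv
    by_cases hK : v ∈ K₁ ∪ K₂
    · exact Or.inl (not_not.1 fun hR => hv ⟨hK, hR⟩)
    · exact Or.inr (not_or.1 hK)
  refine reach_subset_of_closed (fun y hy hyM => ?_) (fun u v huv hu _ hvM => ?_)
  · rcases h y hyM with hR | ⟨hy₁, -⟩
    exacts [hR, Or.inl (mem_reach_self hy hy₁)]
  · rcases h v hvM with hR | ⟨hv₁, hv₂⟩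
    · exact hR
    rcases hu with hu | hu
    exacts [Or.inl (mem_reach_of_adj hu huv hv₁), Or.inr (mem_reach_of_adj hu huv hv₂)]

theorem reach_sepJoin_subset :
    Reach G Y (sepJoin G Y K₁ K₂) ⊆ (NR G Y K₁ ∪ NR G Y K₂)ᶜ := by
  refine reach_subset_of_closed (fun y hy _ hyN => ?_) (fun u v huv hu huJ _ hvN => ?_)
  · rcases hyN with hy₁ | hy₂
    exacts [hy₁.2 (mem_reach_self hy hy₁.1), hy₂.2 (mem_reach_self hy hy₂.1)]
  · have hu₁₂ : u ∉ K₁ ∪ K₂ := fun hK => huJ ⟨hK, hu⟩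
    rcases hvN with hv | hv
    · rcases mem_reach_or_mem_nr (fun h => hu₁₂ (Or.inl h)) with hR | hN
      exacts [hv.2 (mem_reach_of_adj hR huv hv.1), hu (Or.inl hN)]
    · rcases mem_reach_or_mem_nr (fun h => hu₁₂ (Or.inr h)) with hR | hN
      exacts [hv.2 (mem_reach_of_adj hR huv hv.1), hu (Or.inr hN)]

theorem nr_union_subset_nr_sepJoin :
    NR G Y K₁ ∪ NR G Y K₂ ⊆ NR G Y (sepJoin G Y K₁ K₂) :=
  fun _ hv => ⟨fun hJ => hJ.2 hv, fun hR => reach_sepJoin_subset hR hv⟩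

theorem IsSeparator.sepMeet (h₁ : IsSeparator G X Y K₁) (h₂ : IsSeparator G X Y K₂) :
    IsSeparator G X Y (sepMeet G Y K₁ K₂) := by
  rw [isSeparator_iff] at h₁ h₂ ⊢
  refine ⟨sdiff_subset.trans (union_subset h₁.1 h₂.1), ?_⟩
  exact (disjoint_union_right.2 ⟨h₁.2, h₂.2⟩).mono_right reach_sepMeet_subset

theorem IsSeparator.sepJoin (h₁ : IsSeparator G X Y K₁) (h₂ : IsSeparator G X Y K₂) :
    IsSeparator G X Y (sepJoin G Y K₁ K₂) := by
  refine isSeparator_iff.2 ⟨sdiff_subset.trans (union_subset h₁.1 h₂.1), ?_⟩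
  refine Set.disjoint_left.2 fun x hx hR => reach_sepJoin_subset hR ?_
  exact Or.inl (h₁.subset_nr hx)

theorem ncard_sepMeet_add_ncard_sepJoin [Finite V] (G : SimpleGraph V) (Y K₁ K₂ : Set V) :
    (sepMeet G Y K₁ K₂).ncard + (sepJoin G Y K₁ K₂).ncard = K₁.ncard + K₂.ncard := by
  have h₁ := @notMem_of_mem_reach _ G Y K₁
  have h₂ := @notMem_of_mem_reach _ G Y K₂
  have hunion : sepMeet G Y K₁ K₂ ∪ sepJoin G Y K₁ K₂ = K₁ ∪ K₂ := by
    ext v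
    simp only [sepMeet, sepJoin, mem_union, mem_sdiff, mem_nr_iff]
    grind
  have hinter : sepMeet G Y K₁ K₂ ∩ sepJoin G Y K₁ K₂ = K₁ ∩ K₂ := by
    ext v
    simp only [sepMeet, sepJoin, mem_union, mem_inter_iff, mem_sdiff, mem_nr_iff]
    grind
  rw [← ncard_union_add_ncard_inter, hunion, hinter, ncard_union_add_ncard_inter]

theorem minSepSize_le (hK : IsSeparator G X Y K) : minSepSize G X Y ≤ K.ncard :=
  Nat.sInf_le ⟨K, hK, rfl⟩

theorem IsWitness.ncard_le (hK : IsWitness G X Y S K) (hK' : IsSeparator G X Y K')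
    (hK'S : Disjoint K' S) : K.ncard ≤ K'.ncard := by
  have hCE : CE G X Y S ≤ excess G X Y K' := Nat.sInf_le ⟨K', hK', hK'S, rfl⟩
  have hmin := minSepSize_le hK.1
  have hmin' := minSepSize_le hK'
  rw [← hK.2.2] at hCE
  unfold excess at hCE
  omega

theorem IsImportantSeparator.ncard_lt (hK : IsImportantSeparator G X Y K)
    (hK' : IsSeparator G X Y K') (hlt : SepLT G Y K K') : K.ncard < K'.ncard :=
  lt_of_not_ge fun hle => hK.2 ⟨K', hK', hlt, hle⟩

end SeparatorLattice

theorem important_separator_ge_important_witness_general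
    {V : Type*} [Fintype V] (G : SimpleGraph V) (X Y S KS K1 : Set V)
    (hKS : IsImportantWitness G X Y S KS)
    (hK1 : IsImportantSeparator G X Y K1) (hdisj : Disjoint K1 S) :
    SepLE G Y KS K1 := by
  intro a haKS
  by_contra haK1
  have hKSsep := hKS.1.1
  have hK1sep := hK1.1.1
  have hjoin : K1.ncard < (sepJoin G Y KS K1).ncard := by
    refine hK1.ncard_lt (hKSsep.sepJoin hK1sep)
      ⟨Set.subset_union_right.trans nr_union_subset_nr_sepJoin, fun h => haK1 ?_⟩
    exact h ▸ nr_union_subset_nr_sepJoin (Or.inl haKS)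
  have hmeet : KS.ncard ≤ (sepMeet G Y KS K1).ncard :=
    hKS.1.ncard_le (hKSsep.sepMeet hK1sep)
      (Set.disjoint_union_left.2 ⟨hKS.1.2.1, hdisj⟩ |>.mono_left Set.sdiff_subset)
  have hmodular := ncard_sepMeet_add_ncard_sepJoin G Y KS K1
  omega

/-- Let `G` be an `X`–`Y` normalized graph, `S ⊆ N(X)` with no
vertex of `S` adjacent to a vertex of `Y`, `K(S)` the unique important witness
of `S`, and `K1` an important `X`–`Y` separator of `G` disjoint from `S`.
Then `K1 ≥ K(S)`. -/
theorem important_separator_ge_important_witness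
    {V : Type*} [Fintype V] (G : SimpleGraph V) (X Y S KS K1 : Set V)
    (hXY : Disjoint X Y) (hnorm : Normalized G X Y)
    (hS : S ⊆ NSet G X) (hSY : ∀ s ∈ S, ∀ y ∈ Y, ¬ G.Adj s y)
    (hKS : IsImportantWitness G X Y S KS)
    (hK1 : IsImportantSeparator G X Y K1) (hdisj : Disjoint K1 S) :
    SepLE G Y KS K1 :=
  important_separator_ge_important_witness_general G X Y S KS K1 hKS hK1 hdisj
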